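/- arXiv:2110.14495 — 2 statements merged into one kernel-verified Lean document; each statement's English description precedes it below -/
import Mathlib

section
/- Let V and W be inner product spaces, P : W → W an orthogonal projection onto a subspace, and let I_h : W → W be a bounded linear operator satisfying I_h = I_h ∘ P. Suppose T : V → V is a linear map, imp : V → W is a linear map, and imp ∘ T = I_h ∘ imp. Suppose further that imp is surjective onto the range of P and that ‖v‖_V = ‖imp v‖_W defines the norm on V. Then for every n ≥ 1, the operator norm of Tⁿ on V equals the operator norm of (I_h)ⁿ on W. -/
/-!
Since `imp` is an isometry intertwining `T` with `I_h`, every bound for `I_hⁿ` bounds `Tⁿ`.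
Conversely, for `n ≥ 1` we have `I_hⁿ = I_hⁿ ∘ P`, and `P` is a contraction (Pythagoras) whose
range lies in the isometric copy of `V`, so `‖I_hⁿ w‖ = ‖I_hⁿ (P w)‖ ≤ ‖Tⁿ‖ ‖P w‖ ≤ ‖Tⁿ‖ ‖w‖`.
-/

open ContinuousLinearMap

lemma norm_le_of_inner_sub_eq_zero {𝕜 E : Type*} [RCLike 𝕜] [NormedAddCommGroup E]
    [InnerProductSpace 𝕜 E] {w p : E} (h : inner 𝕜 (w - p) p = 0) : ‖p‖ ≤ ‖w‖ := by
  have hpyth := norm_add_sq_eq_norm_sq_add_norm_sq_of_inner_eq_zero _ _ h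
  rw [sub_add_cancel] at hpyth
  nlinarith [norm_nonneg (w - p), norm_nonneg p, norm_nonneg w]

lemma ContinuousLinearMap.pow_comp_eq_pow_of_comp_eq {R M : Type*} [Semiring R]
    [TopologicalSpace M] [AddCommMonoid M] [Module R M] {S P : M →L[R] M} (h : S.comp P = S)
    {n : ℕ} (hn : 1 ≤ n) : (S ^ n).comp P = S ^ n := by
  obtain ⟨m, rfl⟩ := Nat.exists_eq_add_of_le' hn
  rw [pow_succ, mul_def, comp_assoc, h]

section Intertwining

variable {𝕜 V W : Type*} [NontriviallyNormedField 𝕜]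
  [SeminormedAddCommGroup V] [NormedSpace 𝕜 V] [SeminormedAddCommGroup W] [NormedSpace 𝕜 W]
  {f : V → W} {T : V →L[𝕜] V} {S : W →L[𝕜] W}

lemma ContinuousLinearMap.opNorm_le_of_isometry_of_semiconj (hf : ∀ v, ‖f v‖ = ‖v‖)
    (hTS : Function.Semiconj f T S) : ‖T‖ ≤ ‖S‖ :=
  T.opNorm_le_bound (norm_nonneg _) fun v => by
    rw [← hf (T v), hTS v, ← hf v]
    exact S.le_opNorm (f v)

lemma ContinuousLinearMap.opNorm_le_of_isometry_of_semiconj_of_comp_eq (hf : ∀ v, ‖f v‖ = ‖v‖)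
    (hTS : Function.Semiconj f T S) {P : W →L[𝕜] W} (hPrange : ∀ w, P w ∈ Set.range f)
    (hPnorm : ∀ w, ‖P w‖ ≤ ‖w‖) (hSP : S.comp P = S) : ‖S‖ ≤ ‖T‖ :=
  S.opNorm_le_bound (norm_nonneg _) fun w => by
    obtain ⟨v, hv⟩ := hPrange w
    calc ‖S w‖ = ‖S (f v)‖ := by rw [hv, ← comp_apply, hSP]
      _ = ‖T v‖ := by rw [← hTS v, hf]
      _ ≤ ‖T‖ * ‖v‖ := T.le_opNorm v
      _ = ‖T‖ * ‖P w‖ := by rw [← hf v, hv]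
      _ ≤ ‖T‖ * ‖w‖ := mul_le_mul_of_nonneg_left (hPnorm w) (norm_nonneg _)

end Intertwining

theorem stmt_3_general (V W : Type*) [NormedAddCommGroup V] [NormedSpace ℂ V]
    [NormedAddCommGroup W] [InnerProductSpace ℂ W]
    (imp : V →ₗ[ℂ] W) (hiso : ∀ v : V, ‖imp v‖ = ‖v‖)
    (P : W →L[ℂ] W)
    (hPrange : ∀ w : W, P w ∈ Set.range imp)
    (hPorth : ∀ w : W, ∀ v ∈ Set.range imp, (inner ℂ (w - P w) v : ℂ) = 0)
    (T : V →L[ℂ] V) (Ih : W →L[ℂ] W)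
    (hIhP : Ih.comp P = Ih)
    (hintw : ∀ v : V, imp (T v) = Ih (imp v))
    (n : ℕ) (hn : 1 ≤ n) :
    ‖T ^ n‖ = ‖Ih ^ n‖ := by
  have hsemiconj : Function.Semiconj imp (⇑(T ^ n)) (⇑(Ih ^ n)) := by
    simpa only [FunLike.coe_pow_eq_iterate] using Function.Semiconj.iterate_right hintw n
  have hPnorm (w : W) : ‖P w‖ ≤ ‖w‖ :=
    norm_le_of_inner_sub_eq_zero (hPorth w (P w) (hPrange w))
  exact le_antisymm (opNorm_le_of_isometry_of_semiconj hiso hsemiconj)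
    (opNorm_le_of_isometry_of_semiconj_of_comp_eq hiso hsemiconj hPrange hPnorm
      (pow_comp_eq_pow_of_comp_eq hIhP hn))

/-- If `imp : V → W` is a linear isometry onto the range of an orthogonal projection `P`,
`I_h = I_h ∘ P`, and `imp ∘ T = I_h ∘ imp`, then `‖Tⁿ‖ = ‖I_hⁿ‖` for every `n ≥ 1`. -/
theorem stmt_3 (V W : Type*) [NormedAddCommGroup V] [NormedSpace ℂ V]
    [NormedAddCommGroup W] [InnerProductSpace ℂ W]
    (imp : V →ₗ[ℂ] W) (hiso : ∀ v : V, ‖imp v‖ = ‖v‖)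
    (P : W →L[ℂ] W)
    (hPrange : ∀ w : W, P w ∈ Set.range imp)
    (hPid : ∀ w ∈ Set.range imp, P w = w)
    (hPorth : ∀ w : W, ∀ v ∈ Set.range imp, (inner ℂ (w - P w) v : ℂ) = 0)
    (T : V →L[ℂ] V) (Ih : W →L[ℂ] W)
    (hIhP : Ih.comp P = Ih)
    (hintw : ∀ v : V, imp (T v) = Ih (imp v))
    (n : ℕ) (hn : 1 ≤ n) :
    ‖T ^ n‖ = ‖Ih ^ n‖ :=
  stmt_3_general V W imp hiso P hPrange hPorth T Ih hIhP hintw n hn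
end

section
/- Let V be a finite-dimensional complex inner product space, a : V × V → ℂ a sesquilinear form such that the map A : V → V* defined by (A u)(v) = a(u, v) is invertible. Let Γ be another finite-dimensional inner product space and tr : V → Γ a linear map. Define V₀ = {w ∈ V : a(w, v) = 0 for all v ∈ ker(tr)}. Then for each w ∈ V₀ there exists a unique g ∈ Γ' := tr(V) such that a(w, v) = ⟨g, tr v⟩_Γ for all v ∈ V; moreover w ↦ ‖g‖_Γ defines a norm on V₀. -/
set_option linter.unnecessarySimpa false

/-- Auxiliary: existence of the impedance representative. -/
lemma stmt_8_exists {V Γ : Type*}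
    [NormedAddCommGroup V] [InnerProductSpace ℂ V] [FiniteDimensional ℂ V]
    [NormedAddCommGroup Γ] [InnerProductSpace ℂ Γ] [FiniteDimensional ℂ Γ]
    (a : V →ₗ[ℂ] V →ₛₗ[starRingEnd ℂ] ℂ) (tr : V →ₗ[ℂ] Γ) (w : V)
    (hw : ∀ v : V, tr v = 0 → a w v = 0) :
    ∃ g : Γ, g ∈ Set.range tr ∧ ∀ v : V, a w v = (inner ℂ (tr v) g : ℂ) := by
  -- the ℂ-linear functional v ↦ conj (a w v)
  let b : V →ₗ[ℂ] ℂ :=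
    { toFun := fun v => (starRingEnd ℂ) (a w v)
      map_add' := by intro x y; simp
      map_smul' := by
        intro c x
        simp [LinearMap.map_smulₛₗ, mul_comm] }
  have hker : LinearMap.ker tr ≤ LinearMap.ker b := by
    intro v hv
    simp only [LinearMap.mem_ker] at hv ⊢
    simp [b, hw v hv]
  let q : (V ⧸ LinearMap.ker tr) →ₗ[ℂ] ℂ := Submodule.liftQ _ b hker
  let e : (V ⧸ LinearMap.ker tr) ≃ₗ[ℂ] LinearMap.range tr := tr.quotKerEquivRange
  let f : LinearMap.range tr →ₗ[ℂ] ℂ := q.comp (e.symm : _ →ₗ[ℂ] _)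
  let g' : LinearMap.range tr :=
    (InnerProductSpace.toDual ℂ (LinearMap.range tr)).symm
      (LinearMap.toContinuousLinearMap f)
  refine ⟨(g' : Γ), g'.2, fun v => ?_⟩
  have h1 : (inner ℂ g' (⟨tr v, LinearMap.mem_range_self tr v⟩ : LinearMap.range tr) : ℂ)
      = f ⟨tr v, LinearMap.mem_range_self tr v⟩ := by
    simpa [g'] using
      (InnerProductSpace.toDual_symm_apply (E := LinearMap.range tr) (𝕜 := ℂ)
        (y := LinearMap.toContinuousLinearMap f)
        (x := ⟨tr v, LinearMap.mem_range_self tr v⟩))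
  have h2 : f ⟨tr v, LinearMap.mem_range_self tr v⟩ = b v := by
    have he : e (Submodule.Quotient.mk v) = ⟨tr v, LinearMap.mem_range_self tr v⟩ := rfl
    have : e.symm ⟨tr v, LinearMap.mem_range_self tr v⟩ = Submodule.Quotient.mk v := by
      rw [← he, LinearEquiv.symm_apply_apply]
    simp [f, this, q]
  have h3 : (inner ℂ (tr v) (g' : Γ) : ℂ)
      = inner ℂ (⟨tr v, LinearMap.mem_range_self tr v⟩ : LinearMap.range tr) g' := rfl
  rw [h3, ← inner_conj_symm, h1, h2]
  simp [b]

/-- Discrete impedance data (Lemma 3.4 / Proposition 3.6, abstract form): for a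
nondegenerate sesquilinear form `a` on a finite-dimensional space `V` and a linear map
`tr : V → Γ`, every `w` in `V₀ = {w : a(w,v) = 0 ∀ v ∈ ker tr}` has a unique
representative `g ∈ range tr` with `a(w,v) = ⟨tr v, g⟩` for all `v`; moreover
`w ↦ ‖g‖` defines a norm on `V₀` (positivity, homogeneity, triangle inequality). -/
theorem stmt_8 (V Γ : Type*)
    [NormedAddCommGroup V] [InnerProductSpace ℂ V] [FiniteDimensional ℂ V]
    [NormedAddCommGroup Γ] [InnerProductSpace ℂ Γ] [FiniteDimensional ℂ Γ]
    (a : V →ₗ[ℂ] V →ₛₗ[starRingEnd ℂ] ℂ)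
    (ha : Function.Bijective fun u : V => a u)
    (tr : V →ₗ[ℂ] Γ) :
    let V₀ : Set V := {w | ∀ v : V, tr v = 0 → a w v = 0}
    -- existence and uniqueness of the impedance data
    (∀ w ∈ V₀, ∃! g : Γ, g ∈ Set.range tr ∧ ∀ v : V, a w v = (inner ℂ (tr v) g : ℂ)) ∧
    -- positivity: vanishing impedance data forces w = 0
    (∀ w ∈ V₀, ∀ g : Γ,
      (g ∈ Set.range tr ∧ ∀ v : V, a w v = (inner ℂ (tr v) g : ℂ)) → ‖g‖ = 0 → w = 0) ∧
    -- homogeneity: the impedance data of c • w is c • g (so its norm is ‖c‖·‖g‖)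
    (∀ w ∈ V₀, ∀ (c : ℂ) (g : Γ),
      (g ∈ Set.range tr ∧ ∀ v : V, a w v = (inner ℂ (tr v) g : ℂ)) →
      (c • g ∈ Set.range tr ∧ (∀ v : V, a (c • w) v = (inner ℂ (tr v) (c • g) : ℂ)) ∧
        ‖c • g‖ = ‖c‖ * ‖g‖)) ∧
    -- triangle inequality
    (∀ w₁ ∈ V₀, ∀ w₂ ∈ V₀, ∀ g₁ g₂ : Γ,
      (g₁ ∈ Set.range tr ∧ ∀ v : V, a w₁ v = (inner ℂ (tr v) g₁ : ℂ)) →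
      (g₂ ∈ Set.range tr ∧ ∀ v : V, a w₂ v = (inner ℂ (tr v) g₂ : ℂ)) →
      ∃ g : Γ, g ∈ Set.range tr ∧ (∀ v : V, a (w₁ + w₂) v = (inner ℂ (tr v) g : ℂ)) ∧
        ‖g‖ ≤ ‖g₁‖ + ‖g₂‖) := by
  intro V₀
  refine ⟨?_, ?_, ?_, ?_⟩
  · -- existence and uniqueness
    intro w hw
    obtain ⟨g, hgmem, hgrep⟩ := stmt_8_exists a tr w hw
    refine ⟨g, ⟨hgmem, hgrep⟩, ?_⟩
    rintro g' ⟨hg'mem, hg'rep⟩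
    have hd : g' - g ∈ LinearMap.range tr := by
      have h1 : g' ∈ LinearMap.range tr := by rwa [LinearMap.mem_range] at *
      have h2 : g ∈ LinearMap.range tr := hgmem
      exact Submodule.sub_mem _ h1 h2
    obtain ⟨u, hu⟩ := hd
    have : (inner ℂ (g' - g) (g' - g) : ℂ) = 0 := by
      rw [← hu]
      nth_rewrite 2 [hu]
      rw [inner_sub_right, ← hgrep u, ← hg'rep u, sub_self]
    rw [inner_self_eq_zero, sub_eq_zero] at this
    exact this
  · -- positivity
    intro w _ g ⟨_, hrep⟩ hnorm
    have hg0 : g = 0 := norm_eq_zero.mp hnorm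
    have haw : a w = a 0 := by
      rw [map_zero]
      ext v
      simp [hrep v, hg0]
    exact ha.injective haw
  · -- homogeneity
    intro w _ c g ⟨⟨u, hu⟩, hrep⟩
    refine ⟨⟨c • u, by simp [hu]⟩, fun v => ?_, norm_smul c g⟩
    rw [map_smul, inner_smul_right]
    simp [hrep v]
  · -- triangle
    intro w₁ _ w₂ _ g₁ g₂ ⟨⟨u₁, hu₁⟩, hrep₁⟩ ⟨⟨u₂, hu₂⟩, hrep₂⟩
    refine ⟨g₁ + g₂, ⟨u₁ + u₂, by simp [hu₁, hu₂]⟩, fun v => ?_, norm_add_le g₁ g₂⟩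
    rw [map_add, inner_add_right, LinearMap.add_apply, hrep₁ v, hrep₂ v]
end
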